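/- arXiv:1203.2590 — 4 statements merged into one kernel-verified Lean document; each statement's English description precedes it below -/
import Mathlib

section
/- Let y : [0,∞) → ℝ be C¹ with y(0) = ẙ > 0, and suppose y'(r) ≤ -m(r)/r² for all r > 0, where m(r) = 4π ∫₀ʳ s^(2+2l) g(y(s)) ds, g is continuous and increasing with g(z) = 0 for z ≤ 0 and g(z) > 0 for z > 0, and l > -1/2. If the limit y_∞ := lim_{r→∞} y(r) is strictly positive, then one obtains a contradiction; i.e., it is impossible that inf_{r≥0} y(r) > 0. -/
/-!
If `y ≥ ε > 0` on `[0, ∞)`, then monotonicity of `g` gives `g (y s) ≥ g ε > 0`, so the mass grows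
at least like `m r ≥ 4π g(ε) r^(2l+3) / (2l+3)`. The differential inequality then yields
`y' r ≤ -C r^(2l+1)`, and integrating from `0` gives `y r ≤ y 0 - C r^(2l+2) / (2l+2) → -∞`,
contradicting `y ≥ ε`.
-/

open Real MeasureTheory Set Filter

theorem mul_rpow_div_le_integral_rpow_mul {p c r : ℝ} {f : ℝ → ℝ} (hp : -1 < p) (hr : 0 ≤ r)
    (hf : IntervalIntegrable (fun s => s ^ p * f s) volume 0 r)
    (hcf : ∀ s ∈ Icc 0 r, c ≤ f s) :
    c * r ^ (p + 1) / (p + 1) ≤ ∫ s in (0:ℝ)..r, s ^ p * f s := by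
  calc c * r ^ (p + 1) / (p + 1) = ∫ s in (0:ℝ)..r, c * s ^ p := by
        rw [intervalIntegral.integral_const_mul, integral_rpow (Or.inl hp),
          zero_rpow (by linarith : p + 1 ≠ 0)]
        ring
    _ ≤ ∫ s in (0:ℝ)..r, s ^ p * f s :=
        intervalIntegral.integral_mono_on hr
          ((intervalIntegral.intervalIntegrable_rpow' hp).const_mul c) hf fun s hs => by
            rw [mul_comm]
            exact mul_le_mul_of_nonneg_left (hcf s hs) (rpow_nonneg hs.1 _)

theorem le_sub_div_mul_rpow_of_deriv_le {y y' : ℝ → ℝ} {c q : ℝ} (hq : -1 < q)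
    (hyc : ContinuousOn y (Ici 0)) (hy : ∀ r > 0, HasDerivAt y (y' r) r)
    (hy' : ∀ r > 0, y' r ≤ -(c * r ^ q)) {r : ℝ} (hr : 0 ≤ r) :
    y r ≤ y 0 - c / (q + 1) * r ^ (q + 1) := by
  have hq1 : 0 < q + 1 := by linarith
  have hanti : AntitoneOn (fun r => y r + c / (q + 1) * r ^ (q + 1)) (Ici 0) := by
    refine antitoneOn_of_hasDerivWithinAt_nonpos (convex_Ici 0)
      (hyc.add (continuousOn_const.mul (continuousOn_id.rpow_const fun _ _ => Or.inr hq1.le)))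
      (f' := fun r => y' r + c * r ^ q) (fun r hr => ?_) (fun r hr => ?_)
    · rw [interior_Ici] at hr
      have hpow := hasDerivAt_rpow_const (p := q + 1) (Or.inl (ne_of_gt hr))
      rw [add_sub_cancel_right] at hpow
      refine ((hy r hr).add (hpow.const_mul (c / (q + 1)))).hasDerivWithinAt.congr_deriv ?_
      field_simp
    · rw [interior_Ici] at hr
      linarith [hy' r hr]
  have := hanti self_mem_Ici hr hr
  simp only [zero_rpow hq1.ne', mul_zero, add_zero] at this
  linarith

theorem exists_lt_of_le_sub_mul_rpow {y : ℝ → ℝ} {a b K q : ℝ} (hK : 0 < K) (hq : 0 < q)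
    (hy : ∀ r ≥ 0, y r ≤ a - K * r ^ q) : ∃ r ≥ 0, y r < b := by
  obtain ⟨r, hr0, hr⟩ := ((eventually_ge_atTop 0).and
    (((tendsto_rpow_atTop hq).const_mul_atTop hK).eventually_gt_atTop (a - b))).exists
  exact ⟨r, hr0, by linarith [hy r hr0]⟩

theorem stmt0_general (l : ℝ) (hl : -1/2 < l) (g : ℝ → ℝ)
    (hgc : Continuous g) (hgmono : Monotone g)
    (hgpos : ∀ z > (0:ℝ), 0 < g z)
    (y y' : ℝ → ℝ)
    (hy : ∀ r ∈ Ici (0:ℝ), HasDerivAt y (y' r) r)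
    (hineq : ∀ r > (0:ℝ),
      y' r ≤ -(4 * π * ∫ s in (0:ℝ)..r, s ^ (2 + 2*l) * g (y s)) / r ^ 2) :
    ¬ ∃ ε > (0:ℝ), ∀ r ≥ (0:ℝ), ε ≤ y r := by
  rintro ⟨ε, hε, hεy⟩
  have hyc : ContinuousOn y (Ici 0) := fun r hr => (hy r hr).continuousAt.continuousWithinAt
  have hmass : ∀ r ≥ 0,
      g ε * r ^ (3 + 2*l) / (3 + 2*l) ≤ ∫ s in (0:ℝ)..r, s ^ (2 + 2*l) * g (y s) := by
    intro r hr
    have hint : ContinuousOn (fun s => s ^ (2 + 2*l) * g (y s)) (Icc 0 r) :=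
      (continuousOn_id.rpow_const fun _ _ => Or.inr (by linarith)).mul
        (hgc.comp_continuousOn (hyc.mono Icc_subset_Ici_self))
    have := mul_rpow_div_le_integral_rpow_mul (by linarith) hr
      (hint.intervalIntegrable_of_Icc hr) fun s hs => hgmono (hεy s hs.1)
    rwa [show 2 + 2*l + 1 = 3 + 2*l by ring] at this
  set C := 4 * π * g ε / (3 + 2*l) with hC_def
  have hC : 0 < C := div_pos (by have := hgpos ε hε; positivity) (by linarith)
  have hy' : ∀ r > 0, y' r ≤ -(C * r ^ (1 + 2*l)) := by
    intro r hr
    calc y' r ≤ -(4 * π * ∫ s in (0:ℝ)..r, s ^ (2 + 2*l) * g (y s)) / r ^ 2 := hineq r hr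
      _ ≤ -(4 * π * (g ε * r ^ (3 + 2*l) / (3 + 2*l))) / r ^ 2 := by
        gcongr; exact hmass r hr.le
      _ = -(C * r ^ (1 + 2*l)) := by
        rw [hC_def, show (3 + 2*l) = (1 + 2*l) + 2 by ring, rpow_add hr, rpow_two]
        field_simp
  have hbound : ∀ r ≥ 0, y r ≤ y 0 - C / (2 + 2*l) * r ^ (2 + 2*l) := fun r hr => by
    have := le_sub_div_mul_rpow_of_deriv_le (by linarith) hyc (fun r hr => hy r hr.le) hy' hr
    rwa [show 1 + 2*l + 1 = 2 + 2*l by ring] at this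
  obtain ⟨r, hr0, hr⟩ :=
    exists_lt_of_le_sub_mul_rpow (div_pos hC (by linarith)) (by linarith) hbound (b := ε)
  exact (hεy r hr0).not_gt hr

theorem stmt0 (l : ℝ) (hl : -1/2 < l) (g : ℝ → ℝ)
    (hgc : Continuous g) (hgmono : Monotone g)
    (hg0 : ∀ z ≤ (0:ℝ), g z = 0) (hgpos : ∀ z > (0:ℝ), 0 < g z)
    (y y' : ℝ → ℝ)
    (hy : ∀ r ∈ Ici (0:ℝ), HasDerivAt y (y' r) r)
    (hy'c : ContinuousOn y' (Ici 0))
    (hy0 : 0 < y 0)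
    (hineq : ∀ r > (0:ℝ),
      y' r ≤ -(4 * π * ∫ s in (0:ℝ)..r, s ^ (2 + 2*l) * g (y s)) / r ^ 2) :
    ¬ ∃ ε > (0:ℝ), ∀ r ≥ (0:ℝ), ε ≤ y r :=
  stmt0_general l hl g hgc hgmono hgpos y y' hy hineq
end

section
/- (Compact-support lemma) Let y ∈ C¹([0,∞)) with y(0) = ẙ ∈ (0, y_max) satisfy y'(r) ≤ -m(r)/r² on (0,∞), where m(r) = 4π ∫₀ʳ s^(2+2l) g(y(s)) ds, g ∈ C((-∞, y_max)) is increasing with g = 0 on (-∞,0] and g > 0 on (0, y_max), and l > -1/2. Assume g(z) ≥ c z^(n+l) for 0 < z < z* with constants c > 0, z* > 0, and 0 < n < 3 + l. Then y has a unique zero: there exists a unique R > 0 with y(R) = 0. -/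
/-!
Since `g ≥ 0` below `ymax`, `y' ≤ 0` as long as `y` stays below a level `b ∈ (ẙ, ymax)`, so
`y` never reaches `b`; hence `y ≤ ẙ`, `g ∘ y ≥ 0`, the mass is positive and `y` is strictly
decreasing, which gives uniqueness. If `y` stayed positive, then either `y ≥ z > 0`, so
`m(r) ≳ r^(3+2l)` and `y' ≲ -r^(1+2l)` drives `y` to `-∞`; or `y` eventually drops below `z*`,
where `g(y) ≥ c y^q` for a fixed `q ∈ (1, 3 + 2l)`. In the latter case
`y(r) ≥ y(2r) + m(r)/(2r) ≥ m(r)/(2r)` turns `m' = 4π r^(2+2l) g(y)` into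
`m' ≳ r^(2+2l-q) m^q`, and then `m^(1-q)`, which is positive, would tend to `-∞`.
-/

open Real MeasureTheory Set Filter

lemma sub_le_sub_of_hasDerivAt_le {f f' F F' : ℝ → ℝ} {a b : ℝ} (hab : a ≤ b)
    (hf : ∀ x ∈ Icc a b, HasDerivAt f (f' x) x) (hF : ∀ x ∈ Icc a b, HasDerivAt F (F' x) x)
    (h : ∀ x ∈ Ioo a b, f' x ≤ F' x) : f b - f a ≤ F b - F a := by
  have hanti : AntitoneOn (fun x => f x - F x) (Icc a b) := by
    refine antitoneOn_of_hasDerivWithinAt_nonpos (f' := fun x => f' x - F' x) (convex_Icc a b)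
      (fun x hx => ((hf x hx).sub (hF x hx)).continuousAt.continuousWithinAt) (fun x hx => ?_)
      (fun x hx => ?_) <;> rw [interior_Icc] at hx
    · exact ((hf x (Ioo_subset_Icc_self hx)).sub (hF x (Ioo_subset_Icc_self hx))).hasDerivWithinAt
    · exact sub_nonpos.2 (h x hx)
  linarith [hanti (left_mem_Icc.2 hab) (right_mem_Icc.2 hab) hab]

lemma tendsto_atBot_of_hasDerivAt_le_neg_mul_rpow {W W' : ℝ → ℝ} {a K μ : ℝ} (ha : 0 < a)
    (hK : 0 < K) (hμ : -1 < μ) (hW : ∀ r ∈ Ici a, HasDerivAt W (W' r) r)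
    (hW' : ∀ r ∈ Ioi a, W' r ≤ -K * r ^ μ) : Tendsto W atTop atBot := by
  have hμ1 : 0 < μ + 1 := by linarith
  set F : ℝ → ℝ := fun r => -K / (μ + 1) * r ^ (μ + 1)
  have hF : ∀ r ∈ Ici a, HasDerivAt F (-K * r ^ μ) r := fun r hr => by
    refine ((hasDerivAt_rpow_const (Or.inl (ha.trans_le hr).ne')).const_mul
      (-K / (μ + 1))).congr_deriv ?_
    rw [add_sub_cancel_right]
    field_simp
  have hFlim : Tendsto (fun r => F r + (W a - F a)) atTop atBot :=
    tendsto_atBot_add_const_right _ _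
      ((tendsto_rpow_atTop hμ1).const_mul_atTop_of_neg (div_neg_of_neg_of_pos (by linarith) hμ1))
  refine tendsto_atBot_mono' atTop ?_ hFlim
  filter_upwards [eventually_ge_atTop a] with r hr
  have := sub_le_sub_of_hasDerivAt_le hr (fun x hx => hW x hx.1) (fun x hx => hF x hx.1)
    (fun x hx => hW' x hx.1)
  linarith

lemma not_forall_pos_of_mul_rpow_mul_rpow_le_hasDerivAt {M M' : ℝ → ℝ} {a K μ q : ℝ}
    (ha : 0 < a) (hK : 0 < K) (hμ : -1 < μ) (hq : 1 < q)
    (hM : ∀ r ∈ Ici a, HasDerivAt M (M' r) r) (hM' : ∀ r ∈ Ioi a, K * r ^ μ * M r ^ q ≤ M' r) :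
    ¬ ∀ r ≥ a, 0 < M r := by
  intro hpos
  have hW : Tendsto (fun r => M r ^ (1 - q)) atTop atBot := by
    refine tendsto_atBot_of_hasDerivAt_le_neg_mul_rpow ha (mul_pos (sub_pos.2 hq) hK) hμ
      (fun r hr => (hM r hr).rpow_const (Or.inl (hpos r hr).ne')) fun r hr => ?_
    have hMr := hpos r (le_of_lt hr)
    have hinv : M r ^ q * M r ^ (1 - q - 1) = 1 := by
      rw [← rpow_add hMr]; norm_num
    have hneg : (1 - q) * M r ^ (1 - q - 1) ≤ 0 :=
      mul_nonpos_of_nonpos_of_nonneg (by linarith) (rpow_nonneg hMr.le _)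
    calc M' r * (1 - q) * M r ^ (1 - q - 1) = M' r * ((1 - q) * M r ^ (1 - q - 1)) := by ring
      _ ≤ K * r ^ μ * M r ^ q * ((1 - q) * M r ^ (1 - q - 1)) :=
        mul_le_mul_of_nonpos_right (hM' r hr) hneg
      _ = -((q - 1) * K) * r ^ μ * (M r ^ q * M r ^ (1 - q - 1)) := by ring
      _ = -((q - 1) * K) * r ^ μ := by rw [hinv, mul_one]
  obtain ⟨r, hWr, hr⟩ :=
    ((hW.eventually (eventually_le_atBot 0)).and (eventually_ge_atTop a)).exists
  exact (rpow_pos_of_pos (hpos r hr) _).not_ge hWr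

lemma antitoneOn_of_hasDerivAt_nonpos_of_lt {f f' : ℝ → ℝ} {a b : ℝ}
    (hf : ∀ x ∈ Ici a, HasDerivAt f (f' x) x) (hb : f a < b)
    (hf' : ∀ x > a, (∀ s ∈ Icc a x, f s < b) → f' x ≤ 0) : AntitoneOn f (Ici a) := by
  have hanti : ∀ {x z}, a ≤ x → x ≤ z → (∀ s ∈ Ioo x z, f' s ≤ 0) → f z ≤ f x := fun hx hxz h => by
    have := sub_le_sub_of_hasDerivAt_le (F := 0) (F' := 0) hxz
      (fun s hs => hf s (hx.trans hs.1)) (fun _ _ => hasDerivAt_const _ _) h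
    simpa using this
  have hlt : ∀ r ≥ a, f r < b := by
    by_contra! hge
    set S := Ici a ∩ f ⁻¹' Ici b
    have hSc : IsClosed S := ContinuousOn.preimage_isClosed_of_isClosed
      (fun x hx => (hf x hx).continuousAt.continuousWithinAt) isClosed_Ici isClosed_Ici
    have hSb : BddBelow S := ⟨a, fun x hx => hx.1⟩
    obtain ⟨haT, hbT⟩ : sInf S ∈ S := hSc.csInf_mem hge hSb
    have hbelow : ∀ s ∈ Ico a (sInf S), f s < b := fun s hs =>
      not_le.1 fun hbs => hs.2.not_ge (csInf_le hSb ⟨hs.1, hbs⟩)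
    have hT : a < sInf S := haT.lt_of_ne fun h => (h ▸ hb).not_ge hbT
    have := hanti le_rfl hT.le fun s hs =>
      hf' s hs.1 fun t ht => hbelow t ⟨ht.1, ht.2.trans_lt hs.2⟩
    linarith [show b ≤ f (sInf S) from hbT]
  exact fun x hx z hz hxz => hanti hx hxz fun s hs =>
    hf' s (hx.trans_lt hs.1) fun t ht => hlt t ht.1

noncomputable def mass (k : ℝ) (f : ℝ → ℝ) (r : ℝ) : ℝ := 4 * π * ∫ s in (0 : ℝ)..r, s ^ k * f s

section mass

variable {k : ℝ} {f : ℝ → ℝ}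

lemma continuousOn_rpow_mul (hk : 0 ≤ k) (hf : ContinuousOn f (Ici 0)) :
    ContinuousOn (fun s => s ^ k * f s) (Ici 0) :=
  (continuousOn_id.rpow_const fun _ _ => Or.inr hk).mul hf

lemma intervalIntegrable_rpow_mul (hk : 0 ≤ k) (hf : ContinuousOn f (Ici 0)) {a b : ℝ}
    (ha : 0 ≤ a) (hb : 0 ≤ b) : IntervalIntegrable (fun s => s ^ k * f s) volume a b :=
  ((continuousOn_rpow_mul hk hf).mono fun _ hx => (le_min ha hb).trans hx.1).intervalIntegrable

lemma mass_nonneg {r : ℝ} (hr : 0 ≤ r) (hf : ∀ s ∈ Icc 0 r, 0 ≤ f s) : 0 ≤ mass k f r :=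
  mul_nonneg (by positivity) <| intervalIntegral.integral_nonneg hr fun s hs =>
    mul_nonneg (rpow_nonneg hs.1 _) (hf s hs)

lemma monotoneOn_mass (hk : 0 ≤ k) (hf : ContinuousOn f (Ici 0)) (hf0 : ∀ s ≥ 0, 0 ≤ f s) :
    MonotoneOn (mass k f) (Ici 0) := fun r hr t ht hrt =>
  mul_le_mul_of_nonneg_left (intervalIntegral.integral_mono_interval le_rfl hr hrt
    (ae_restrict_of_forall_mem measurableSet_Ioc fun s hs =>
      mul_nonneg (rpow_nonneg hs.1.le _) (hf0 s hs.1.le))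
    (intervalIntegrable_rpow_mul hk hf le_rfl ht)) (by positivity)

lemma mass_pos (hk : 0 ≤ k) (hf : ContinuousOn f (Ici 0)) (hf0 : ∀ s ≥ 0, 0 ≤ f s)
    (hfpos : 0 < f 0) {r : ℝ} (hr : 0 < r) : 0 < mass k f r := by
  obtain ⟨δ, hδ, hfδ⟩ : ∃ δ > 0, ∀ s ∈ Ico 0 δ, 0 < f s := by
    obtain ⟨δ, hδ, hsub⟩ := Metric.mem_nhdsWithin_iff.1
      (hf.continuousWithinAt self_mem_Ici (Ioi_mem_nhds hfpos))
    exact ⟨δ, hδ, fun s hs => hsub ⟨by simpa [abs_of_nonneg hs.1] using hs.2, hs.1⟩⟩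
  have hr' : 0 < min r δ := lt_min hr hδ
  refine lt_of_lt_of_le ?_ (monotoneOn_mass hk hf hf0 hr'.le hr.le (min_le_left r δ))
  exact mul_pos (by positivity) (intervalIntegral.intervalIntegral_pos_of_pos_on
    (intervalIntegrable_rpow_mul hk hf le_rfl hr'.le)
    (fun s hs => mul_pos (rpow_pos_of_pos hs.1 _)
      (hfδ s ⟨hs.1.le, hs.2.trans_le (min_le_right r δ)⟩)) hr')

lemma hasDerivAt_mass (hk : 0 ≤ k) (hf : ContinuousOn f (Ici 0)) {r : ℝ} (hr : 0 < r) :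
    HasDerivAt (mass k f) (4 * π * (r ^ k * f r)) r :=
  (intervalIntegral.integral_hasDerivAt_right (intervalIntegrable_rpow_mul hk hf le_rfl hr.le)
    (((continuousOn_rpow_mul hk hf).mono fun _ hx => le_of_lt hx).stronglyMeasurableAtFilter
      isOpen_Ioi _ hr)
    ((continuousOn_rpow_mul hk hf).continuousAt (Ici_mem_nhds hr))).const_mul _

lemma mul_rpow_le_mass (hk : 0 ≤ k) (hf : ContinuousOn f (Ici 0)) {m r : ℝ} (hr : 0 ≤ r)
    (hm : ∀ s ∈ Icc 0 r, m ≤ f s) : 4 * π * m * r ^ (k + 1) / (k + 1) ≤ mass k f r := by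
  have hint : ∫ s in (0 : ℝ)..r, s ^ k * m = m * r ^ (k + 1) / (k + 1) := by
    rw [intervalIntegral.integral_mul_const, integral_rpow (Or.inl (by linarith)),
      zero_rpow (by linarith)]
    ring
  have hle : ∫ s in (0 : ℝ)..r, s ^ k * m ≤ ∫ s in (0 : ℝ)..r, s ^ k * f s :=
    intervalIntegral.integral_mono_on hr
      (((continuous_id.rpow_const fun _ => Or.inr hk).mul continuous_const).intervalIntegrable _ _)
      (intervalIntegrable_rpow_mul hk hf le_rfl hr)
      fun s hs => mul_le_mul_of_nonneg_left (hm s hs) (rpow_nonneg hs.1 _)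
  rw [hint] at hle
  rw [mass, mul_assoc, mul_div_assoc]
  exact mul_le_mul_of_nonneg_left hle (by positivity)

end mass

section

variable {k : ℝ} {f y y' : ℝ → ℝ}

lemma antitoneOn_of_le_neg_mass_comp {g : ℝ → ℝ} {b : ℝ} (hg : ∀ z < b, 0 ≤ g z)
    (hy : ∀ r ∈ Ici 0, HasDerivAt y (y' r) r) (hyb : y 0 < b)
    (hineq : ∀ r > 0, y' r ≤ -mass k (g ∘ y) r / r ^ 2) : AntitoneOn y (Ici 0) :=
  antitoneOn_of_hasDerivAt_nonpos_of_lt hy hyb fun x hx hlt =>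
    (hineq x hx).trans <| div_nonpos_of_nonpos_of_nonneg
      (neg_nonpos.2 (mass_nonneg hx.le fun s hs => hg _ (hlt s hs))) (sq_nonneg x)

lemma strictAntiOn_of_le_neg_mass (hk : 0 ≤ k) (hf : ContinuousOn f (Ici 0))
    (hf0 : ∀ s ≥ 0, 0 ≤ f s) (hfpos : 0 < f 0) (hy : ∀ r ∈ Ici 0, HasDerivAt y (y' r) r)
    (hineq : ∀ r > 0, y' r ≤ -mass k f r / r ^ 2) : StrictAntiOn y (Ici 0) := by
  refine strictAntiOn_of_hasDerivWithinAt_neg (f' := y') (convex_Ici 0)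
    (fun x hx => (hy x hx).continuousAt.continuousWithinAt) (fun x hx => ?_) fun x hx => ?_ <;>
    rw [interior_Ici] at hx
  · exact (hy x (mem_Ici.2 (le_of_lt hx))).hasDerivWithinAt
  · exact (hineq x hx).trans_lt (div_neg_of_neg_of_pos
      (neg_neg_of_pos (mass_pos hk hf hf0 hfpos hx)) (pow_pos hx 2))

lemma mass_div_two_mul_le (hk : 0 ≤ k) (hf : ContinuousOn f (Ici 0))
    (hf0 : ∀ s ≥ 0, 0 ≤ f s) (hy : ∀ r ∈ Ici 0, HasDerivAt y (y' r) r)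
    (hineq : ∀ r > 0, y' r ≤ -mass k f r / r ^ 2) {r : ℝ} (hr : 0 < r) (hy2r : 0 ≤ y (2 * r)) :
    mass k f r / (2 * r) ≤ y r := by
  set m := mass k f r
  have hcmp := sub_le_sub_of_hasDerivAt_le (f := y) (F := fun s => m / s)
    (F' := fun s => -m / s ^ 2) (by linarith : r ≤ 2 * r)
    (fun s hs => hy s (hr.le.trans hs.1))
    (fun s hs => by simpa [div_eq_mul_inv, neg_div] using
      (hasDerivAt_inv (hr.trans_le hs.1).ne').const_mul m)
    fun s hs => (hineq s (hr.trans hs.1)).trans <| div_le_div_of_nonneg_right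
      (neg_le_neg (monotoneOn_mass hk hf hf0 hr.le (hr.trans hs.1).le hs.1.le)) (sq_nonneg s)
  have : m / (2 * r) = m / r - m / (2 * r) := by field_simp; ring
  linarith

lemma tendsto_atBot_of_le_neg_mass (hk : 0 < k) (hf : ContinuousOn f (Ici 0))
    (hy : ∀ r ∈ Ici 0, HasDerivAt y (y' r) r) (hineq : ∀ r > 0, y' r ≤ -mass k f r / r ^ 2)
    {m : ℝ} (hm : 0 < m) (hfm : ∀ r ≥ 0, m ≤ f r) : Tendsto y atTop atBot := by
  refine tendsto_atBot_of_hasDerivAt_le_neg_mul_rpow (K := 4 * π * m / (k + 1)) one_pos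
    (by positivity) (by linarith : -1 < k - 1) (fun r hr => hy r (zero_le_one.trans (mem_Ici.1 hr)))
    fun r hr => (hineq r (one_pos.trans hr)).trans ?_
  have hr0 : 0 < r := one_pos.trans hr
  have hpow : r ^ (k + 1) = r ^ (k - 1) * r ^ 2 := by
    rw [← rpow_natCast, ← rpow_add hr0]; ring_nf
  have hlow := mul_rpow_le_mass hk.le hf hr0.le fun s hs => hfm s hs.1
  rw [div_le_iff₀ (pow_pos hr0 2)]
  calc -mass k f r ≤ -(4 * π * m * r ^ (k + 1) / (k + 1)) := neg_le_neg hlow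
    _ = -(4 * π * m / (k + 1)) * r ^ (k - 1) * r ^ 2 := by rw [hpow]; ring

lemma exists_nonpos_of_mul_rpow_le (hk : 0 ≤ k) (hf : ContinuousOn f (Ici 0))
    (hf0 : ∀ s ≥ 0, 0 ≤ f s) (hfpos : 0 < f 0) (hy : ∀ r ∈ Ici 0, HasDerivAt y (y' r) r)
    (hineq : ∀ r > 0, y' r ≤ -mass k f r / r ^ 2) {a c q : ℝ} (ha : 0 < a) (hc : 0 < c)
    (hq : 1 < q) (hqk : q < k + 1) (hfy : ∀ r ≥ a, 0 < y r → c * y r ^ q ≤ f r) :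
    ∃ r ≥ a, y r ≤ 0 := by
  by_contra! hpos
  refine not_forall_pos_of_mul_rpow_mul_rpow_le_hasDerivAt (K := 4 * π * c / 2 ^ q) ha
    (by positivity) (by linarith : -1 < k - q) hq
    (fun r hr => hasDerivAt_mass hk hf (ha.trans_le hr)) (fun r hr => ?_)
    fun r hr => mass_pos hk hf hf0 hfpos (ha.trans_le hr)
  have hr0 : 0 < r := ha.trans hr
  have hM := mass_div_two_mul_le hk hf hf0 hy hineq hr0 (hpos _ (by linarith [mem_Ioi.1 hr])).le
  have hyq : (mass k f r / (2 * r)) ^ q ≤ y r ^ q :=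
    rpow_le_rpow (div_nonneg (mass_pos hk hf hf0 hfpos hr0).le (by positivity)) hM (by linarith)
  have hsplit : 4 * π * c / 2 ^ q * r ^ (k - q) * mass k f r ^ q =
      4 * π * (r ^ k * (c * (mass k f r / (2 * r)) ^ q)) := by
    rw [div_rpow (mass_pos hk hf hf0 hfpos hr0).le (by positivity), mul_rpow zero_le_two hr0.le,
      rpow_sub hr0]
    field_simp
  rw [hsplit]
  gcongr
  exact (mul_le_mul_of_nonneg_left hyq hc.le).trans (hfy r (le_of_lt hr) (hpos r (le_of_lt hr)))

lemma exists_pos_eq_zero_of_le_neg_mass (hk : 0 < k) (hf : ContinuousOn f (Ici 0))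
    (hf0 : ∀ s ≥ 0, 0 ≤ f s) (hfpos : 0 < f 0) (hy : ∀ r ∈ Ici 0, HasDerivAt y (y' r) r)
    (hineq : ∀ r > 0, y' r ≤ -mass k f r / r ^ 2) (hy0 : 0 < y 0)
    (hlow : ∀ z > 0, (∀ r ≥ 0, z ≤ y r) → ∃ m > 0, ∀ r ≥ 0, m ≤ f r) {z₀ c q : ℝ}
    (hz₀ : 0 < z₀) (hc : 0 < c) (hq : 1 < q) (hqk : q < k + 1)
    (hgrowth : ∀ r ≥ 0, 0 < y r → y r < z₀ → c * y r ^ q ≤ f r) : ∃ R > 0, y R = 0 := by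
  suffices ∃ r ≥ 0, y r ≤ 0 by
    obtain ⟨r, hr, hyr⟩ := this
    obtain ⟨R, hR, hyR⟩ := intermediate_value_Icc' hr
      (fun x hx => (hy x hx.1).continuousAt.continuousWithinAt) ⟨hyr, hy0.le⟩
    exact ⟨R, hR.1.lt_of_ne fun h => hy0.ne' (h ▸ hyR), hyR⟩
  by_contra! hpos
  by_cases hbdd : ∃ z > 0, ∀ r ≥ 0, z ≤ y r
  · obtain ⟨z, hz, hzy⟩ := hbdd
    obtain ⟨m, hm, hmf⟩ := hlow z hz hzy
    obtain ⟨r, hyr, hr⟩ := (((tendsto_atBot_of_le_neg_mass hk hf hy hineq hm hmf).eventually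
      (eventually_le_atBot 0)).and (eventually_ge_atTop 0)).exists
    exact (hpos r hr).not_ge hyr
  · push Not at hbdd
    obtain ⟨r₀, hr₀, hyr₀⟩ := hbdd z₀ hz₀
    have hanti := (strictAntiOn_of_le_neg_mass hk.le hf hf0 hfpos hy hineq).antitoneOn
    obtain ⟨r, hr, hyr⟩ := exists_nonpos_of_mul_rpow_le hk.le hf hf0 hfpos hy hineq
      (a := r₀ + 1) (by linarith) hc hq hqk fun r hr hyr => hgrowth r (by linarith) hyr <|
        (hanti hr₀ (by simp only [mem_Ici]; linarith) (by linarith)).trans_lt hyr₀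
    exact (hpos r (by linarith)).not_ge hyr

end

theorem stmt1_general (l n c zstar : ℝ) (hl : -1/2 < l) (hn3 : n < 3 + l)
    (hc : 0 < c) (hzs : 0 < zstar)
    (ymax : EReal) (g : ℝ → ℝ)
    (hgc : ContinuousOn g {z : ℝ | (z : EReal) < ymax})
    (hgmono : MonotoneOn g {z : ℝ | (z : EReal) < ymax})
    (hg0 : ∀ z ≤ (0:ℝ), g z = 0)
    (hgpos : ∀ z : ℝ, 0 < z → (z : EReal) < ymax → 0 < g z)
    (hgrow : ∀ z : ℝ, 0 < z → z < zstar → c * z ^ (n + l) ≤ g z)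
    (y y' : ℝ → ℝ) (ya : ℝ) (hya : 0 < ya) (hyamax : (ya : EReal) < ymax)
    (hy0 : y 0 = ya)
    (hy : ∀ r ∈ Ici (0:ℝ), HasDerivAt y (y' r) r)
    (hineq : ∀ r > (0:ℝ),
      y' r ≤ -(4 * π * ∫ s in (0:ℝ)..r, s ^ (2 + 2*l) * g (y s)) / r ^ 2) :
    ∃! R : ℝ, 0 < R ∧ y R = 0 := by
  have hineq' : ∀ r > 0, y' r ≤ -mass (2 + 2 * l) (g ∘ y) r / r ^ 2 := hineq
  have hk : 0 < 2 + 2 * l := by linarith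
  have hg_nonneg : ∀ z : ℝ, (z : EReal) < ymax → 0 ≤ g z := fun z hz =>
    (le_or_gt z 0).elim (fun h => (hg0 z h).ge) fun h => (hgpos z h hz).le
  obtain ⟨b, hyab, hbmax⟩ := EReal.exists_between_coe_real hyamax
  have hyle : ∀ r ≥ 0, y r ≤ ya := fun r hr => hy0 ▸
    antitoneOn_of_le_neg_mass_comp
      (fun z hz => hg_nonneg z ((EReal.coe_lt_coe_iff.2 hz).trans hbmax))
      hy (hy0 ▸ EReal.coe_lt_coe_iff.1 hyab) hineq' self_mem_Ici hr hr
  have hyD : ∀ r ≥ 0, (y r : EReal) < ymax := fun r hr =>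
    (EReal.coe_le_coe_iff.2 (hyle r hr)).trans_lt hyamax
  have hfc : ContinuousOn (g ∘ y) (Ici 0) :=
    hgc.comp (fun r hr => (hy r hr).continuousAt.continuousWithinAt) fun r hr => hyD r hr
  have hf0 : ∀ r ≥ 0, 0 ≤ (g ∘ y) r := fun r hr => hg_nonneg _ (hyD r hr)
  have hfpos : 0 < (g ∘ y) 0 := by simpa [hy0] using hgpos ya hya hyamax
  have hgrow' : ∀ z q, 0 < z → z < min zstar 1 → n + l ≤ q → c * z ^ q ≤ g z :=
    fun z q hz hz₁ hq => (mul_le_mul_of_nonneg_left (rpow_le_rpow_of_exponent_ge hz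
      (hz₁.le.trans (min_le_right _ _)) hq) hc.le).trans
        (hgrow z hz (hz₁.trans_le (min_le_left _ _)))
  obtain ⟨R, hR, hyR⟩ := exists_pos_eq_zero_of_le_neg_mass hk hfc hf0 hfpos hy hineq' (hy0 ▸ hya)
    (fun z hz hzy => have hzD := (EReal.coe_le_coe_iff.2 (hzy 0 le_rfl)).trans_lt (hyD 0 le_rfl)
      ⟨g z, hgpos z hz hzD, fun r hr => hgmono hzD (hyD r hr) (hzy r hr)⟩)
    (lt_min hzs one_pos) hc (q := (max (n + l) 1 + (3 + 2 * l)) / 2)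
    (by linarith [le_max_right (n + l) 1])
    (by linarith [max_lt (by linarith : n + l < 3 + 2 * l) (by linarith : (1 : ℝ) < 3 + 2 * l)])
    fun r _ hyr hsmall => hgrow' _ _ hyr hsmall (by linarith [le_max_left (n + l) 1])
  exact ⟨R, ⟨hR, hyR⟩, fun R' ⟨hR', hyR'⟩ =>
    (strictAntiOn_of_le_neg_mass hk.le hfc hf0 hfpos hy hineq').injOn hR'.le hR.le
      (hyR'.trans hyR.symm)⟩

theorem stmt1 (l n c zstar : ℝ) (hl : -1/2 < l) (hn0 : 0 < n) (hn3 : n < 3 + l)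
    (hc : 0 < c) (hzs : 0 < zstar)
    (ymax : EReal) (g : ℝ → ℝ)
    (hgc : ContinuousOn g {z : ℝ | (z : EReal) < ymax})
    (hgmono : MonotoneOn g {z : ℝ | (z : EReal) < ymax})
    (hg0 : ∀ z ≤ (0:ℝ), g z = 0)
    (hgpos : ∀ z : ℝ, 0 < z → (z : EReal) < ymax → 0 < g z)
    (hgrow : ∀ z : ℝ, 0 < z → z < zstar → c * z ^ (n + l) ≤ g z)
    (y y' : ℝ → ℝ) (ya : ℝ) (hya : 0 < ya) (hyamax : (ya : EReal) < ymax)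
    (hy0 : y 0 = ya)
    (hy : ∀ r ∈ Ici (0:ℝ), HasDerivAt y (y' r) r)
    (hy'c : ContinuousOn y' (Ici 0))
    (hineq : ∀ r > (0:ℝ),
      y' r ≤ -(4 * π * ∫ s in (0:ℝ)..r, s ^ (2 + 2*l) * g (y s)) / r ^ 2) :
    ∃! R : ℝ, 0 < R ∧ y R = 0 :=
  stmt1_general l n c zstar hl hn3 hc hzs ymax g hgc hgmono hg0 hgpos hgrow y y' ya hya hyamax hy0
    hy hineq
end

section
/- Let c > 0, y* > 0, l > -1/2, and n with 0 < n < 3 + l and n + l ≠ 1. Suppose a positive function y(r) satisfies y(r) ≥ m₁/r for r ≥ 1 (with m₁ > 0), y(r) → 0 as r → ∞, and C₁ r^(2l+2) ≤ (1/c) ∫_{y(r)}^{y*} η^{-(n+l)} dη + C₂ for all large r, with constants C₁, C₂ > 0. Then this is contradictory; i.e., no such function exists. -/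
/-! Multiplying the inequality by `y(r) ^ (2l+2)`, the left side stays above `C₁ m₁ ^ (2l+2)`
because `r y(r) ≥ m₁`, while the right side is a combination of `y(r) ^ (2l+2)` and
`y(r) ^ (3+l-n)` (the integral being explicit), both of which tend to `0` with `y(r)`. -/

open Real MeasureTheory Set Filter

lemma integral_rpow_of_pos {a b s : ℝ} (ha : 0 < a) (hb : 0 < b) (hs : s ≠ -1) :
    ∫ η in a..b, η ^ s = (b ^ (s + 1) - a ^ (s + 1)) / (s + 1) :=
  integral_rpow (Or.inr ⟨hs, notMem_uIcc_of_lt ha hb⟩)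

lemma tendsto_integral_rpow_mul_rpow_nhds_zero {α : Type*} {l : Filter α} {y : α → ℝ}
    {b s p : ℝ} (hy : Tendsto y l (nhds 0)) (hy_pos : ∀ᶠ x in l, 0 < y x) (hb : 0 < b)
    (hs : s ≠ -1) (hp : 0 < p) (hsp : 0 < s + 1 + p) :
    Tendsto (fun x => (∫ η in y x..b, η ^ s) * y x ^ p) l (nhds 0) := by
  have hlim : Tendsto (fun x => (b ^ (s + 1) * y x ^ p - y x ^ (s + 1 + p)) / (s + 1)) l
      (nhds ((b ^ (s + 1) * 0 - 0) / (s + 1))) :=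
    ((((hy.rpow_const_nhds_zero hp).const_mul _).sub
      (hy.rpow_const_nhds_zero hsp)).div_const _)
  rw [mul_zero, sub_zero, zero_div] at hlim
  refine hlim.congr' ?_
  filter_upwards [hy_pos] with x hx
  rw [integral_rpow_of_pos hx hb hs, rpow_add hx]
  ring

theorem stmt5_general (c ystar l n m₁ C₁ C₂ : ℝ) (hys : 0 < ystar)
    (hl : -1/2 < l) (hn3 : n < 3 + l) (hnl : n + l ≠ 1)
    (hm : 0 < m₁) (hC₁ : 0 < C₁)
    (y : ℝ → ℝ) (hypos : ∀ r : ℝ, 0 < y r)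
    (hlow : ∀ r ≥ (1:ℝ), m₁ / r ≤ y r)
    (hlim : Tendsto y atTop (nhds 0))
    (hineq : ∃ r₀ : ℝ, ∀ r ≥ r₀,
      C₁ * r ^ (2*l+2) ≤ (1/c) * (∫ η in (y r)..ystar, η ^ (-(n+l))) + C₂) :
    False := by
  obtain ⟨r₀, hineq⟩ := hineq
  have hp : 0 < 2*l+2 := by linarith
  have hrhs : Tendsto (fun r => ((1/c) * (∫ η in (y r)..ystar, η ^ (-(n+l))) + C₂)
      * y r ^ (2*l+2)) atTop (nhds 0) := by
    have hI := tendsto_integral_rpow_mul_rpow_nhds_zero hlim (.of_forall hypos) hys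
      (s := -(n+l)) (by contrapose! hnl; linarith) hp (by linarith)
    simpa [add_mul, mul_assoc] using
      (hI.const_mul (1/c)).add ((hlim.rpow_const_nhds_zero hp).const_mul C₂)
  have hlhs : ∀ᶠ r in atTop, C₁ * m₁ ^ (2*l+2) ≤
      ((1/c) * (∫ η in (y r)..ystar, η ^ (-(n+l))) + C₂) * y r ^ (2*l+2) := by
    filter_upwards [eventually_ge_atTop (max r₀ 1)] with r hr
    have hr₁ : 1 ≤ r := le_of_max_le_right hr
    have hr_pos : 0 < r := one_pos.trans_le hr₁
    have hm_le : m₁ ≤ r * y r := by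
      rw [mul_comm, ← div_le_iff₀ hr_pos]
      exact hlow r hr₁
    calc C₁ * m₁ ^ (2*l+2) ≤ C₁ * (r * y r) ^ (2*l+2) := by gcongr
      _ = C₁ * r ^ (2*l+2) * y r ^ (2*l+2) := by rw [mul_rpow hr_pos.le (hypos r).le]; ring
      _ ≤ _ := mul_le_mul_of_nonneg_right (hineq r (le_of_max_le_left hr))
        (rpow_nonneg (hypos r).le _)
  exact (mul_pos hC₁ (rpow_pos_of_pos hm _)).not_ge (ge_of_tendsto hrhs hlhs)

theorem stmt5 (c ystar l n m₁ C₁ C₂ : ℝ) (hc : 0 < c) (hys : 0 < ystar)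
    (hl : -1/2 < l) (hn0 : 0 < n) (hn3 : n < 3 + l) (hnl : n + l ≠ 1)
    (hm : 0 < m₁) (hC₁ : 0 < C₁) (hC₂ : 0 < C₂)
    (y : ℝ → ℝ) (hypos : ∀ r : ℝ, 0 < y r)
    (hlow : ∀ r ≥ (1:ℝ), m₁ / r ≤ y r)
    (hlim : Tendsto y atTop (nhds 0))
    (hineq : ∃ r₀ : ℝ, ∀ r ≥ r₀,
      C₁ * r ^ (2*l+2) ≤ (1/c) * (∫ η in (y r)..ystar, η ^ (-(n+l))) + C₂) :
    False :=
  stmt5_general c ystar l n m₁ C₁ C₂ hys hl hn3 hnl hm hC₁ y hypos hlow hlim hineq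
end

section
/- Let Φ : ℝ → [0,∞) be measurable with Φ(η) = 0 for η < 0, and suppose for every compact K ⊂ ℝ there is C > 0 with Φ(η) ≤ C η^κ for η ∈ K ∩ (0,∞), where κ > -1. Let l > -1/2 and define g(z) = c_l ∫₀^z Φ(η)(z-η)^(l+1/2) dη for z > 0, g(z) = 0 for z ≤ 0. Then g is continuous on ℝ, continuously differentiable on (0,∞), and g'(z) = (l+1/2) c_l ∫₀^z Φ(η)(z-η)^(l-1/2) dη for z > 0. If moreover κ + l + 1/2 > 0, then g ∈ C¹(ℝ). -/
/-!
Write `H_q(z) = ∫₀^z Φ(η) (z - η)^q dη`; then `g = c_l H_{l+1/2}` on all of `ℝ`, since both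
sides vanish for `z ≤ 0`. Fubini on the triangle `0 < η < t < z` gives
`H_p(z) = p ∫₀^z H_{p-1}(t) dt`, so the derivative formula is the fundamental theorem of calculus
as soon as `H_{p-1}` is continuous. For `z₀ > 0`, split the integral at `z₀ / 2`: on `(0, z₀ / 2)`
the kernel is smooth in `z` near `z₀`, while on `(z₀ / 2, 2 z₀)` the density `Φ` is bounded, and a
bounded function integrated against a translate of an `L¹` kernel depends continuously on the
translation (approximate the kernel in `L¹` by continuous compactly supported functions). Near `0`,
`Φ(η) ≤ C η^κ` gives `H_q(z) ≤ C B(κ + 1, q + 1) z^(κ + q + 1)`, which tends to `0` when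
`κ + q + 1 > 0`; for `q = l - 1/2` this is the condition `κ + l + 1/2 > 0`.
-/

open Real MeasureTheory Set Filter
open intervalIntegral Topology

theorem rpow_le_max_rpow {a b x q : ℝ} (ha : 0 < a) (hax : a ≤ x) (hxb : x ≤ b) :
    x ^ q ≤ max (a ^ q) (b ^ q) := by
  rcases le_or_gt 0 q with hq | hq
  · exact le_max_of_le_right (rpow_le_rpow (ha.le.trans hax) hxb hq)
  · exact le_max_of_le_left (rpow_le_rpow_of_nonpos ha hax hq.le)

theorem continuous_of_eq_zero_of_nonpos {f : ℝ → ℝ} (hneg : ∀ z ≤ 0, f z = 0)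
    (hpos : ContinuousOn f (Ioi 0)) (hzero : Tendsto f (𝓝[>] 0) (𝓝 0)) : Continuous f := by
  refine continuous_iff_continuousAt.2 fun x => ?_
  rcases lt_trichotomy x 0 with hx | rfl | hx
  · refine continuousAt_const.congr (f := fun _ => (0:ℝ)) ?_
    filter_upwards [Iio_mem_nhds hx] with z hz using (hneg z hz.le).symm
  · refine continuousAt_iff_continuous_left_right.2 ⟨?_, ?_⟩
    · exact continuousWithinAt_const.congr (fun z hz => hneg z hz) (hneg 0 le_rfl)
    · rw [← continuousWithinAt_Ioi_iff_Ici, ContinuousWithinAt, hneg 0 le_rfl]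
      exact hzero
  · exact hpos.continuousAt (Ioi_mem_nhds hx)

theorem continuous_intervalIntegral_mul_comp_sub {f k : ℝ → ℝ} {a b M : ℝ} (hab : a ≤ b)
    (hfm : AEStronglyMeasurable f (volume.restrict (Ioc a b)))
    (hfM : ∀ η ∈ Ioc a b, ‖f η‖ ≤ M) (hk : Integrable k) :
    Continuous fun z => ∫ η in a..b, f η * k (z - η) := by
  have hfM' : ∀ᵐ η ∂volume.restrict (Ioc a b), ‖f η‖ ≤ |M| :=
    (ae_restrict_iff' measurableSet_Ioc).2
      (ae_of_all _ fun η hη => (hfM η hη).trans (le_abs_self M))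
  have hint : ∀ h : ℝ → ℝ, Integrable h → ∀ z,
      IntervalIntegrable (fun η => f η * h (z - η)) volume a b := fun h hh z =>
    (intervalIntegrable_iff_integrableOn_Ioc_of_le hab).2
      ((hh.comp_sub_left z).restrict.bdd_mul hfm hfM')
  refine continuous_of_uniform_approx_of_continuous fun u hu => ?_
  obtain ⟨ε, hε, hεu⟩ := Metric.mem_uniformity_dist.1 hu
  obtain ⟨k', hk'supp, hkk', hk'c, hk'i⟩ :=
    hk.exists_hasCompactSupport_integral_sub_le (ε := ε / (2 * (|M| + 1))) (by positivity)
  refine ⟨fun z => ∫ η in a..b, f η * k' (z - η), ?_, fun z => hεu ?_⟩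
  · obtain ⟨C, hC⟩ := hk'c.bounded_above_of_compact_support hk'supp
    refine continuous_of_dominated_interval (bound := fun _ => |M| * C)
      (fun z => (hint k' hk'i z).def'.aestronglyMeasurable) ?_ intervalIntegrable_const
      (ae_of_all _ fun η _ => by fun_prop)
    intro z
    rw [uIoc_of_le hab]
    filter_upwards [(ae_restrict_iff' measurableSet_Ioc).1 hfM'] with η hη hηI
    rw [norm_mul]
    exact mul_le_mul (hη hηI) (hC _) (norm_nonneg _) (abs_nonneg M)
  · have hdiff : ∀ z, IntervalIntegrable (fun η => |M| * ‖k (z - η) - k' (z - η)‖) volume a b :=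
      fun z => (((hk.sub hk'i).norm.comp_sub_left z).intervalIntegrable).const_mul _
    calc dist (∫ η in a..b, f η * k (z - η)) (∫ η in a..b, f η * k' (z - η))
        = ‖∫ η in a..b, f η * (k (z - η) - k' (z - η))‖ := by
          rw [dist_eq_norm, ← integral_sub (hint k hk z) (hint k' hk'i z)]
          simp only [mul_sub]
      _ ≤ ∫ η in a..b, |M| * ‖k (z - η) - k' (z - η)‖ := by
          refine norm_integral_le_of_norm_le hab ?_ (hdiff z)
          filter_upwards [(ae_restrict_iff' measurableSet_Ioc).1 hfM'] with η hη hηI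
          rw [norm_mul]
          exact mul_le_mul_of_nonneg_right (hη hηI) (norm_nonneg _)
      _ ≤ |M| * ∫ η, ‖k (z - η) - k' (z - η)‖ := by
          rw [intervalIntegral.integral_const_mul, integral_of_le hab]
          exact mul_le_mul_of_nonneg_left (setIntegral_le_integral
            ((hk.sub hk'i).norm.comp_sub_left z) (ae_of_all _ fun _ => norm_nonneg _))
            (abs_nonneg M)
      _ ≤ |M| * (ε / (2 * (|M| + 1))) := by
          rw [integral_sub_left_eq_self (fun x => ‖k x - k' x‖)]
          exact mul_le_mul_of_nonneg_left hkk' (abs_nonneg M)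
      _ < ε := by
          rw [mul_div_assoc', div_lt_iff₀ (by positivity)]
          nlinarith [abs_nonneg M]

theorem integral_integral_swap_triangle {F : ℝ → ℝ → ℝ} {z : ℝ} (hz : 0 ≤ z)
    (hFm : Measurable (Function.uncurry F)) (hF0 : ∀ η t, η < t → 0 ≤ F η t)
    (hslice : ∀ η ∈ Ioo 0 z, IntervalIntegrable (F η) volume η z)
    (hmarg : IntervalIntegrable (fun η => ∫ t in η..z, F η t) volume 0 z) :
    IntervalIntegrable (fun t => ∫ η in (0:ℝ)..t, F η t) volume 0 z ∧
      ∫ t in (0:ℝ)..z, ∫ η in (0:ℝ)..t, F η t = ∫ η in (0:ℝ)..z, ∫ t in η..z, F η t := by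
  set μ := volume.restrict (Ioo (0:ℝ) z)
  set G := {p : ℝ × ℝ | p.1 < p.2}.indicator (Function.uncurry F)
  have hμ : ∀ {a b} (f : ℝ → ℝ), Ioo a b ⊆ Ioo 0 z → a ≤ b →
      ∫ x in Ioo 0 z, (Ioo a b).indicator f x = ∫ x in a..b, f x := fun f hsub hab => by
    rw [setIntegral_indicator measurableSet_Ioo, inter_eq_right.2 hsub, integral_of_le hab,
      integral_Ioc_eq_integral_Ioo]
  have hGt : ∀ η ∈ Ioo 0 z, (fun t => G (η, t)) =ᵐ[μ] (Ioo η z).indicator (F η) := fun η _ =>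
    (ae_restrict_iff' measurableSet_Ioo).2 (ae_of_all _ fun t ht => by
      by_cases h : η < t <;> simp [G, h, ht.2])
  have hGη : ∀ t ∈ Ioo 0 z, (fun η => G (η, t)) =ᵐ[μ] (Ioo 0 t).indicator (fun η => F η t) :=
    fun t _ => (ae_restrict_iff' measurableSet_Ioo).2 (ae_of_all _ fun η hη => by
      by_cases h : η < t <;> simp [G, h, hη.1])
  have hGt_int : ∀ η ∈ Ioo 0 z, ∫ t, G (η, t) ∂μ = ∫ t in η..z, F η t := fun η hη => by
    rw [integral_congr_ae (hGt η hη)]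
    exact hμ _ (Ioo_subset_Ioo_left hη.1.le) hη.2.le
  have hGη_int : ∀ t ∈ Ioo 0 z, ∫ η, G (η, t) ∂μ = ∫ η in (0:ℝ)..t, F η t := fun t ht => by
    rw [integral_congr_ae (hGη t ht)]
    exact hμ _ (Ioo_subset_Ioo_right ht.2.le) ht.1.le
  have hG0 : ∀ p, 0 ≤ G p := indicator_nonneg fun p hp => hF0 p.1 p.2 hp
  have hG : Integrable G (μ.prod μ) := by
    refine (integrable_prod_iff (hFm.indicator (measurableSet_lt measurable_fst
      measurable_snd)).aestronglyMeasurable).2 ⟨?_, ?_⟩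
    · filter_upwards [ae_restrict_mem measurableSet_Ioo] with η hη
      refine Integrable.congr ?_ (hGt η hη).symm
      exact ((integrable_indicator_iff measurableSet_Ioo).2
        ((intervalIntegrable_iff_integrableOn_Ioo_of_le hη.2.le).1 (hslice η hη))).restrict
    · refine ((intervalIntegrable_iff_integrableOn_Ioo_of_le hz).1 hmarg).congr ?_
      filter_upwards [ae_restrict_mem measurableSet_Ioo] with η hη
      rw [← hGt_int η hη]
      exact integral_congr_ae (ae_of_all _ fun t => (norm_of_nonneg (hG0 _)).symm)
  have hinner : EqOn (fun t => ∫ η, G (η, t) ∂μ) (fun t => ∫ η in (0:ℝ)..t, F η t) (Ioo 0 z) :=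
    fun t ht => hGη_int t ht
  refine ⟨(intervalIntegrable_iff_integrableOn_Ioo_of_le hz).2 (hG.integral_prod_right.congr
    ((ae_restrict_iff' measurableSet_Ioo).2 (ae_of_all _ hinner))), ?_⟩
  rw [integral_of_le hz, integral_of_le hz, integral_Ioc_eq_integral_Ioo,
    integral_Ioc_eq_integral_Ioo, ← setIntegral_congr_fun measurableSet_Ioo hinner,
    ← integral_integral_swap (f := fun η t => G (η, t)) hG,
    setIntegral_congr_fun measurableSet_Ioo hGt_int]

-- The Riemann–Liouville integral of order `q + 1` of `Φ`, without the factor `1 / Γ(q + 1)`.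
noncomputable def rlIntegral (q : ℝ) (Φ : ℝ → ℝ) (z : ℝ) : ℝ :=
  ∫ η in (0:ℝ)..z, Φ η * (z - η) ^ q

section RiemannLiouville

variable {κ q p C z : ℝ} {Φ : ℝ → ℝ}

theorem intervalIntegrable_rpow_mul_sub_rpow (hκ : -1 < κ) (hq : -1 < q)
    (hz : 0 < z) : IntervalIntegrable (fun η => η ^ κ * (z - η) ^ q) volume 0 z := by
  have hright : IntervalIntegrable (fun η => (z - η) ^ q) volume (z / 2) z := by
    simpa [show z - z / 2 = z / 2 by ring] using
      (intervalIntegrable_rpow' hq (a := z / 2) (b := 0)).comp_sub_left z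
  refine IntervalIntegrable.trans (b := z / 2) ?_ ?_
  · refine (intervalIntegrable_rpow' hκ).mul_continuousOn fun η hη => ?_
    rw [uIcc_of_le (by linarith)] at hη
    exact ((by fun_prop : ContinuousAt (fun η => z - η) η).rpow_const
      (Or.inl (by linarith [hη.2]))).continuousWithinAt
  · refine hright.continuousOn_mul fun η hη => ?_
    rw [uIcc_of_le (by linarith)] at hη
    exact ((continuousAt_id' η).rpow_const (Or.inl (by linarith [hη.1]))).continuousWithinAt

theorem integral_rpow_mul_sub_rpow (hz : 0 < z) :
    ∫ η in (0:ℝ)..z, η ^ κ * (z - η) ^ q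
      = z ^ (κ + q + 1) * ∫ s in (0:ℝ)..1, s ^ κ * (1 - s) ^ q := by
  have hscale := integral_comp_mul_left (fun η => η ^ κ * (z - η) ^ q) hz.ne'
    (a := 0) (b := 1)
  simp only [mul_zero, mul_one, smul_eq_mul] at hscale
  have hpoint : ∀ s ∈ uIcc (0:ℝ) 1,
      (z * s) ^ κ * (z - z * s) ^ q = z ^ κ * z ^ q * (s ^ κ * (1 - s) ^ q) := by
    intro s hs
    rw [uIcc_of_le zero_le_one] at hs
    rw [mul_rpow hz.le hs.1, show z - z * s = z * (1 - s) by ring,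
      mul_rpow hz.le (by linarith [hs.2])]
    ring
  rw [integral_congr hpoint, intervalIntegral.integral_const_mul,
    eq_inv_mul_iff_mul_eq₀ hz.ne'] at hscale
  rw [rpow_add hz, rpow_add hz, rpow_one, ← hscale]
  ring

theorem intervalIntegrable_mul_sub_rpow (hκ : -1 < κ) (hq : -1 < q) (hz : 0 < z)
    (hΦm : Measurable Φ) (hΦnn : ∀ η, 0 ≤ Φ η) (hb : ∀ η ∈ Ioc 0 z, Φ η ≤ C * η ^ κ) :
    IntervalIntegrable (fun η => Φ η * (z - η) ^ q) volume 0 z := by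
  refine ((intervalIntegrable_rpow_mul_sub_rpow hκ hq hz).const_mul C).mono_fun'
    (by fun_prop) ?_
  rw [uIoc_of_le hz.le, EventuallyLE, ae_restrict_iff' measurableSet_Ioc]
  refine ae_of_all _ fun η hη => ?_
  have hzη : 0 ≤ (z - η) ^ q := rpow_nonneg (by linarith [hη.2]) q
  rw [norm_of_nonneg (mul_nonneg (hΦnn η) hzη), ← mul_assoc]
  exact mul_le_mul_of_nonneg_right (hb η hη) hzη

theorem rlIntegral_nonneg (hz : 0 ≤ z) (hΦnn : ∀ η, 0 ≤ Φ η) : 0 ≤ rlIntegral q Φ z :=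
  integral_nonneg hz fun η hη => mul_nonneg (hΦnn η) (rpow_nonneg (by linarith [hη.2]) q)

theorem rlIntegral_of_nonpos (hz : z ≤ 0) (hΦ0 : ∀ η < 0, Φ η = 0) : rlIntegral q Φ z = 0 := by
  rw [rlIntegral, integral_symm, integral_congr_Ioo_of_le hz (g := 0)
    fun η hη => by simp [hΦ0 η hη.2]]
  simp

theorem rlIntegral_le (hκ : -1 < κ) (hq : -1 < q) (hz : 0 < z)
    (hΦm : Measurable Φ) (hΦnn : ∀ η, 0 ≤ Φ η) (hb : ∀ η ∈ Ioc 0 z, Φ η ≤ C * η ^ κ) :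
    rlIntegral q Φ z ≤ C * z ^ (κ + q + 1) * ∫ s in (0:ℝ)..1, s ^ κ * (1 - s) ^ q := by
  calc rlIntegral q Φ z ≤ ∫ η in (0:ℝ)..z, C * (η ^ κ * (z - η) ^ q) := by
        refine integral_mono_on_of_le_Ioo hz.le
          (intervalIntegrable_mul_sub_rpow hκ hq hz hΦm hΦnn hb)
          ((intervalIntegrable_rpow_mul_sub_rpow hκ hq hz).const_mul C) fun η hη => ?_
        rw [← mul_assoc]
        exact mul_le_mul_of_nonneg_right (hb η (Ioo_subset_Ioc_self hη))
          (rpow_nonneg (by linarith [hη.2]) q)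
    _ = _ := by rw [intervalIntegral.integral_const_mul, integral_rpow_mul_sub_rpow hz, mul_assoc]

theorem tendsto_rlIntegral_nhdsGT_zero (hκ : -1 < κ) (hq : -1 < q) (hκq : 0 < κ + q + 1)
    (hΦm : Measurable Φ) (hΦnn : ∀ η, 0 ≤ Φ η) (hb : ∀ η ∈ Ioc 0 1, Φ η ≤ C * η ^ κ) :
    Tendsto (rlIntegral q Φ) (𝓝[>] 0) (𝓝 0) := by
  set B := ∫ s in (0:ℝ)..1, s ^ κ * (1 - s) ^ q
  have hupper : Tendsto (fun z : ℝ => C * z ^ (κ + q + 1) * B) (𝓝[>] 0) (𝓝 0) := by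
    have := ((continuous_rpow_const hκq.le).tendsto 0).const_mul C |>.mul_const B
    simpa [zero_rpow hκq.ne'] using this.mono_left nhdsWithin_le_nhds
  refine tendsto_of_tendsto_of_tendsto_of_le_of_le' tendsto_const_nhds hupper ?_ ?_
  · filter_upwards [self_mem_nhdsWithin] with z hz using rlIntegral_nonneg (le_of_lt hz) hΦnn
  · filter_upwards [Ioc_mem_nhdsGT zero_lt_one] with z hz
    exact rlIntegral_le hκ hq hz.1 hΦm hΦnn fun η hη => hb η ⟨hη.1, hη.2.trans hz.2⟩

-- The kernel is truncated to `[0, T)` only to make it integrable on `ℝ`; since `z ≤ T`,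
-- the truncation is never seen.
theorem rlIntegral_eq_add_integral_indicator {a T : ℝ} (hκ : -1 < κ)
    (hq : -1 < q) (ha : 0 < a) (haz : a ≤ z) (hzT : z ≤ T) (hΦm : Measurable Φ)
    (hΦnn : ∀ η, 0 ≤ Φ η) (hb : ∀ η ∈ Ioc 0 z, Φ η ≤ C * η ^ κ) :
    rlIntegral q Φ z = (∫ η in (0:ℝ)..a, Φ η * (z - η) ^ q)
      + ∫ η in a..T, Φ η * (Ico 0 T).indicator (fun x => x ^ q) (z - η) := by
  set k := (Ico 0 T).indicator fun x : ℝ => x ^ q with hk_def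
  have hint := intervalIntegrable_mul_sub_rpow hκ hq (ha.trans_le haz) hΦm hΦnn hb
  have hkz : EqOn (fun η => Φ η * (z - η) ^ q) (fun η => Φ η * k (z - η)) (uIcc a z) := by
    intro η hη
    rw [uIcc_of_le haz] at hη
    simp only [hk_def, indicator_of_mem (show z - η ∈ Ico 0 T from
      ⟨by linarith [hη.2], by linarith [hη.1]⟩)]
  have hkz' : EqOn (fun η => Φ η * k (z - η)) 0 (uIoo z T) := fun η hη => by
    rw [uIoo_of_le hzT] at hη
    simp [hk_def, indicator_of_notMem (show z - η ∉ Ico 0 T from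
      fun h => by linarith [h.1, hη.1])]
  have hleft : IntervalIntegrable (fun η => Φ η * (z - η) ^ q) volume a z :=
    hint.mono_set (uIcc_subset_uIcc (mem_uIcc_of_le ha.le haz) right_mem_uIcc)
  have hright : IntervalIntegrable (fun η => Φ η * k (z - η)) volume z T :=
    (intervalIntegrable_const (c := (0:ℝ))).congr_uIoo hkz'.symm
  rw [rlIntegral, ← integral_add_adjacent_intervals
      (hint.mono_set (uIcc_subset_uIcc left_mem_uIcc (mem_uIcc_of_le ha.le haz))) hleft,
    ← integral_add_adjacent_intervals (hleft.congr_uIoo (hkz.mono uIoo_subset_uIcc_self)) hright,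
    integral_congr hkz, integral_congr_uIoo hkz']
  simp

theorem continuousAt_integral_mul_sub_rpow {a z₀ : ℝ} (hκ : -1 < κ)
    (ha : 0 < a) (haz₀ : a < z₀) (hC : 0 ≤ C) (hΦm : Measurable Φ) (hΦnn : ∀ η, 0 ≤ Φ η)
    (hb : ∀ η ∈ Ioc 0 a, Φ η ≤ C * η ^ κ) :
    ContinuousAt (fun z => ∫ η in (0:ℝ)..a, Φ η * (z - η) ^ q) z₀ := by
  refine continuousAt_of_dominated_interval
    (bound := fun η => C * η ^ κ * max (((z₀ - a) / 2) ^ q) ((2 * z₀) ^ q))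
    (Eventually.of_forall fun z => (by fun_prop : Measurable _).aestronglyMeasurable) ?_
    (((intervalIntegrable_rpow' hκ).const_mul C).mul_const _) ?_
  · filter_upwards [Ioo_mem_nhds (show (a + z₀) / 2 < z₀ by linarith)
      (show z₀ < 2 * z₀ by linarith)] with z hz
    rw [uIoc_of_le ha.le]
    refine ae_of_all _ fun η hη => ?_
    have hzη : (z₀ - a) / 2 ≤ z - η := by linarith [hη.2, hz.1]
    rw [norm_of_nonneg (mul_nonneg (hΦnn η) (rpow_nonneg (by linarith) q))]
    exact mul_le_mul (hb η hη) (rpow_le_max_rpow (by linarith) hzη (by linarith [hη.1, hz.2]))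
      (rpow_nonneg (by linarith) q) (mul_nonneg hC (rpow_nonneg hη.1.le κ))
  · refine ae_of_all _ fun η hη => ?_
    rw [uIoc_of_le ha.le] at hη
    exact continuousAt_const.mul ((continuousAt_id.sub continuousAt_const).rpow_const
      (Or.inl (by simp; linarith [hη.2])))

theorem continuousAt_rlIntegral {z₀ : ℝ} (hκ : -1 < κ) (hq : -1 < q)
    (hz₀ : 0 < z₀) (hΦm : Measurable Φ) (hΦnn : ∀ η, 0 ≤ Φ η)
    (hb : ∀ η ∈ Ioc 0 (2 * z₀), Φ η ≤ C * η ^ κ) :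
    ContinuousAt (rlIntegral q Φ) z₀ := by
  have hC : 0 ≤ C := nonneg_of_mul_nonneg_left ((hΦnn z₀).trans (hb z₀ ⟨hz₀, by linarith⟩))
    (rpow_pos_of_pos hz₀ κ)
  have hk : Integrable ((Ico 0 (2 * z₀)).indicator fun x : ℝ => x ^ q) :=
    (integrable_indicator_iff measurableSet_Ico).2
      ((intervalIntegrable_iff_integrableOn_Ico_of_le (by positivity)).1
        (intervalIntegrable_rpow' hq))
  have hnear := continuousAt_integral_mul_sub_rpow (q := q) hκ (half_pos hz₀) (half_lt_self hz₀)
    hC hΦm hΦnn fun η hη => hb η ⟨hη.1, by linarith [hη.2]⟩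
  have hfar := continuous_intervalIntegral_mul_comp_sub
    (a := z₀ / 2) (b := 2 * z₀) (M := C * max ((z₀ / 2) ^ κ) ((2 * z₀) ^ κ)) (by linarith)
    hΦm.aestronglyMeasurable
    (fun η hη => by
      rw [norm_of_nonneg (hΦnn η)]
      exact (hb η ⟨by linarith [hη.1], hη.2⟩).trans (mul_le_mul_of_nonneg_left
        (rpow_le_max_rpow (by positivity) hη.1.le hη.2) hC)) hk
  refine (hnear.add hfar.continuousAt).congr ?_
  filter_upwards [Ioo_mem_nhds (half_lt_self hz₀) (show z₀ < 2 * z₀ by linarith)] with z hz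
  exact (rlIntegral_eq_add_integral_indicator hκ hq (half_pos hz₀) hz.1.le hz.2.le hΦm hΦnn
    fun η hη => hb η ⟨hη.1, by linarith [hη.2, hz.2]⟩).symm

theorem rlIntegral_eq_mul_integral_rlIntegral_sub_one (hκ : -1 < κ)
    (hp : 0 < p) (hz : 0 < z) (hΦm : Measurable Φ) (hΦnn : ∀ η, 0 ≤ Φ η)
    (hb : ∀ η ∈ Ioc 0 z, Φ η ≤ C * η ^ κ) :
    IntervalIntegrable (rlIntegral (p - 1) Φ) volume 0 z ∧
      rlIntegral p Φ z = p * ∫ t in (0:ℝ)..z, rlIntegral (p - 1) Φ t := by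
  have hp1 : -1 < p - 1 := by linarith
  have hinner : ∀ η, ∫ t in η..z, Φ η * (t - η) ^ (p - 1) = Φ η * (z - η) ^ p / p := fun η => by
    rw [intervalIntegral.integral_const_mul, integral_comp_sub_right (fun x => x ^ (p - 1)),
      integral_rpow (Or.inl hp1), sub_self, sub_add_cancel, zero_rpow hp.ne', sub_zero,
      mul_div_assoc]
  obtain ⟨hint, hswap⟩ := integral_integral_swap_triangle (F := fun η t => Φ η * (t - η) ^ (p - 1))
    hz.le (by fun_prop)
    (fun η t hηt => mul_nonneg (hΦnn η) (rpow_nonneg (by linarith) _))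
    (fun η _ => by
      simpa using ((intervalIntegrable_rpow' hp1 (a := 0) (b := z - η)).comp_sub_right η).const_mul
        (Φ η))
    (by simpa only [hinner] using
      (intervalIntegrable_mul_sub_rpow hκ (by linarith : -1 < p) hz hΦm hΦnn hb).div_const p)
  refine ⟨hint, ?_⟩
  change ∫ t in (0:ℝ)..z, rlIntegral (p - 1) Φ t = _ at hswap
  rw [hswap, funext hinner, intervalIntegral.integral_div, rlIntegral, mul_div_cancel₀ _ hp.ne']

theorem continuousOn_rlIntegral (hκ : -1 < κ) (hq : -1 < q) (hΦm : Measurable Φ)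
    (hΦnn : ∀ η, 0 ≤ Φ η) (hb : ∀ T, ∃ C, ∀ η ∈ Ioc 0 T, Φ η ≤ C * η ^ κ) :
    ContinuousOn (rlIntegral q Φ) (Ioi 0) := fun z hz =>
  let ⟨_, hC⟩ := hb (2 * z)
  (continuousAt_rlIntegral hκ hq hz hΦm hΦnn hC).continuousWithinAt

theorem continuous_rlIntegral (hκ : -1 < κ) (hq : -1 < q) (hκq : 0 < κ + q + 1)
    (hΦm : Measurable Φ) (hΦnn : ∀ η, 0 ≤ Φ η) (hΦ0 : ∀ η < 0, Φ η = 0)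
    (hb : ∀ T, ∃ C, ∀ η ∈ Ioc 0 T, Φ η ≤ C * η ^ κ) :
    Continuous (rlIntegral q Φ) :=
  let ⟨_, hC⟩ := hb 1
  continuous_of_eq_zero_of_nonpos (fun _ hz => rlIntegral_of_nonpos hz hΦ0)
    (continuousOn_rlIntegral hκ hq hΦm hΦnn hb)
    (tendsto_rlIntegral_nhdsGT_zero hκ hq hκq hΦm hΦnn hC)

theorem hasDerivAt_rlIntegral (hκ : -1 < κ) (hp : 0 < p) (hΦm : Measurable Φ)
    (hΦnn : ∀ η, 0 ≤ Φ η) (hΦ0 : ∀ η < 0, Φ η = 0)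
    (hb : ∀ T, ∃ C, ∀ η ∈ Ioc 0 T, Φ η ≤ C * η ^ κ) {s : Set ℝ} (hs : IsOpen s)
    (hcont : ContinuousOn (rlIntegral (p - 1) Φ) s) (hz : z ∈ s) :
    HasDerivAt (rlIntegral p Φ) (p * rlIntegral (p - 1) Φ z) z := by
  have hprimitive : ∀ u, IntervalIntegrable (rlIntegral (p - 1) Φ) volume 0 u ∧
      rlIntegral p Φ u = p * ∫ t in (0:ℝ)..u, rlIntegral (p - 1) Φ t := by
    intro u
    rcases lt_or_ge 0 u with hu | hu
    · obtain ⟨C, hC⟩ := hb u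
      exact rlIntegral_eq_mul_integral_rlIntegral_sub_one hκ hp hu hΦm hΦnn hC
    · have hzero : EqOn 0 (rlIntegral (p - 1) Φ) (uIoo 0 u) := fun t ht =>
        (rlIntegral_of_nonpos (by rw [uIoo_of_ge hu] at ht; exact ht.2.le) hΦ0).symm
      refine ⟨(intervalIntegrable_const (c := (0:ℝ))).congr_uIoo hzero, ?_⟩
      rw [rlIntegral_of_nonpos hu hΦ0, ← integral_congr_uIoo hzero]
      simp
  rw [funext fun u => (hprimitive u).2]
  exact (integral_hasDerivAt_right (hprimitive z).1 (hcont.stronglyMeasurableAtFilter hs z hz)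
    (hcont.continuousAt (hs.mem_nhds hz))).const_mul p

end RiemannLiouville

theorem stmt12_general (l κ cl : ℝ) (hl : -1/2 < l) (hκ : -1 < κ)
    (Φ : ℝ → ℝ) (hΦm : Measurable Φ) (hΦnn : ∀ η, 0 ≤ Φ η)
    (hΦ0 : ∀ η < (0:ℝ), Φ η = 0)
    (hΦK : ∀ K : Set ℝ, IsCompact K → ∃ C > (0:ℝ), ∀ η ∈ K, 0 < η → Φ η ≤ C * η ^ κ)
    (g : ℝ → ℝ)
    (hg : ∀ z > (0:ℝ), g z = cl * ∫ η in (0:ℝ)..z, Φ η * (z - η) ^ (l + 1/2))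
    (hgz : ∀ z ≤ (0:ℝ), g z = 0) :
    Continuous g ∧
    (∀ z > (0:ℝ), HasDerivAt g
      ((l + 1/2) * cl * ∫ η in (0:ℝ)..z, Φ η * (z - η) ^ (l - 1/2)) z) ∧
    ContinuousOn (deriv g) (Ioi 0) ∧
    (κ + l + 1/2 > 0 → ContDiff ℝ 1 g) := by
  have hb : ∀ T, ∃ C, ∀ η ∈ Ioc 0 T, Φ η ≤ C * η ^ κ := fun T =>
    let ⟨C, _, hC⟩ := hΦK (Icc 0 T) isCompact_Icc
    ⟨C, fun η hη => hC η (Ioc_subset_Icc_self hη) hη.1⟩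
  have hgH : g = fun z => cl * rlIntegral (l + 1/2) Φ z := funext fun z => by
    rcases le_or_gt z 0 with hz | hz
    · rw [hgz z hz, rlIntegral_of_nonpos hz hΦ0, mul_zero]
    · exact hg z hz
  have hderiv : ∀ s, IsOpen s → ContinuousOn (rlIntegral (l - 1/2) Φ) s → ∀ z ∈ s,
      HasDerivAt g ((l + 1/2) * cl * rlIntegral (l - 1/2) Φ z) z := by
    intro s hs hcont z hz
    rw [show l - 1/2 = l + 1/2 - 1 by ring] at hcont ⊢
    rw [hgH, mul_comm _ cl, mul_assoc]
    exact (hasDerivAt_rlIntegral hκ (by linarith) hΦm hΦnn hΦ0 hb hs hcont hz).const_mul cl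
  have hcont' : ContinuousOn (rlIntegral (l - 1/2) Φ) (Ioi 0) :=
    continuousOn_rlIntegral hκ (by linarith) hΦm hΦnn hb
  refine ⟨?_, fun z hz => hderiv _ isOpen_Ioi hcont' z hz, ?_, fun hκl => ?_⟩
  · rw [hgH]
    exact continuous_const.mul
      (continuous_rlIntegral hκ (by linarith) (by linarith) hΦm hΦnn hΦ0 hb)
  · exact (continuousOn_const.mul hcont').congr fun z hz => (hderiv _ isOpen_Ioi hcont' z hz).deriv
  · have hcont := continuous_rlIntegral (q := l - 1/2) hκ (by linarith) (by linarith)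
      hΦm hΦnn hΦ0 hb
    have hderiv' := fun z => hderiv _ isOpen_univ hcont.continuousOn z (mem_univ z)
    refine contDiff_one_iff_deriv.2 ⟨fun z => (hderiv' z).differentiableAt, ?_⟩
    rw [funext fun z => (hderiv' z).deriv]
    exact continuous_const.mul hcont

theorem stmt12 (l κ cl : ℝ) (hl : -1/2 < l) (hκ : -1 < κ) (hcl : 0 < cl)
    (Φ : ℝ → ℝ) (hΦm : Measurable Φ) (hΦnn : ∀ η, 0 ≤ Φ η)
    (hΦ0 : ∀ η < (0:ℝ), Φ η = 0)
    (hΦK : ∀ K : Set ℝ, IsCompact K → ∃ C > (0:ℝ), ∀ η ∈ K, 0 < η → Φ η ≤ C * η ^ κ)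
    (g : ℝ → ℝ)
    (hg : ∀ z > (0:ℝ), g z = cl * ∫ η in (0:ℝ)..z, Φ η * (z - η) ^ (l + 1/2))
    (hgz : ∀ z ≤ (0:ℝ), g z = 0) :
    Continuous g ∧
    (∀ z > (0:ℝ), HasDerivAt g
      ((l + 1/2) * cl * ∫ η in (0:ℝ)..z, Φ η * (z - η) ^ (l - 1/2)) z) ∧
    ContinuousOn (deriv g) (Ioi 0) ∧
    (κ + l + 1/2 > 0 → ContDiff ℝ 1 g) :=
  stmt12_general l κ cl hl hκ Φ hΦm hΦnn hΦ0 hΦK g hg hgz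
end
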